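/- arXiv:1706.06903 — 5 statements merged into one kernel-verified Lean document; each statement's English description precedes it below -/
import Mathlib

section
/- Let a ≠ 0, b, c be real numbers and I ⊆ ℝ a bounded interval. Then the Lebesgue measure of {x ∈ ℝ : a x² + b x + c ∈ I} is bounded by an absolute constant times |I|^{1/2}/|a|^{1/2}. -/
/-! Completing the square, `a x² + b x + c = a (x + b/(2a))² + (c - b²/(4a))`, and translating
reduces the claim to `y² ∈ [s, t]`. That set lies in `{y : √s ≤ |y| ≤ √t}`, two intervals of length
`√t - √s ≤ √(t - s)`. For `a < 0` replace the quadratic by its negative and `I` by `-I`. -/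

open MeasureTheory

lemma Real.sqrt_sub_sqrt_le (s t : ℝ) : √t - √s ≤ √(t - s) := by
  rcases le_or_gt s 0 with hs | hs
  · rw [Real.sqrt_eq_zero'.mpr hs, sub_zero]
    exact Real.sqrt_le_sqrt (by linarith)
  rcases le_or_gt s t with hst | hts
  · rw [sub_le_iff_le_add, Real.sqrt_le_left (by positivity)]
    nlinarith [Real.sq_sqrt hs.le, Real.sq_sqrt (sub_nonneg.mpr hst),
      mul_nonneg (Real.sqrt_nonneg s) (Real.sqrt_nonneg (t - s))]
  · have := Real.sqrt_le_sqrt hts.le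
    linarith [Real.sqrt_nonneg (t - s)]

lemma setOf_sq_mem_Icc_subset (s t : ℝ) :
    {y : ℝ | y ^ 2 ∈ Set.Icc s t} ⊆ Set.Icc (-√t) (-√s) ∪ Set.Icc (√s) (√t) := by
  rintro y ⟨hs, ht⟩
  have hle : |y| ≤ √t := Real.abs_le_sqrt ht
  have hge : √s ≤ |y| := Real.sqrt_sq_eq_abs y ▸ Real.sqrt_le_sqrt hs
  rcases le_or_gt 0 y with hy | hy
  · rw [abs_of_nonneg hy] at hle hge
    exact Or.inr ⟨hge, hle⟩
  · rw [abs_of_neg hy] at hle hge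
    exact Or.inl ⟨by linarith, by linarith⟩

lemma volume_setOf_sq_mem_Icc_le (s t : ℝ) :
    volume {y : ℝ | y ^ 2 ∈ Set.Icc s t} ≤ ENNReal.ofReal (2 * √(t - s)) := by
  have hlen : ENNReal.ofReal (√t - √s) ≤ ENNReal.ofReal √(t - s) :=
    ENNReal.ofReal_le_ofReal (Real.sqrt_sub_sqrt_le s t)
  calc volume {y : ℝ | y ^ 2 ∈ Set.Icc s t}
      ≤ volume (Set.Icc (-√t) (-√s)) + volume (Set.Icc (√s) (√t)) :=
        (measure_mono (setOf_sq_mem_Icc_subset s t)).trans (measure_union_le _ _)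
    _ = ENNReal.ofReal (√t - √s) + ENNReal.ofReal (√t - √s) := by
        rw [Real.volume_Icc, Real.volume_Icc, neg_sub_neg]
    _ ≤ ENNReal.ofReal √(t - s) + ENNReal.ofReal √(t - s) := add_le_add hlen hlen
    _ = ENNReal.ofReal (2 * √(t - s)) := by
        rw [← ENNReal.ofReal_add (by positivity) (by positivity), two_mul]

lemma volume_setOf_quadratic_mem_Icc_le_of_pos {a : ℝ} (ha : 0 < a) (b c x₁ x₂ : ℝ) :
    volume {x : ℝ | a * x ^ 2 + b * x + c ∈ Set.Icc x₁ x₂}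
      ≤ ENNReal.ofReal (2 * √(x₂ - x₁) / √a) := by
  set e := c - b ^ 2 / (4 * a)
  set m := b / (2 * a)
  have hsq (x : ℝ) : a * x ^ 2 + b * x + c = a * (x + m) ^ 2 + e := by
    simp only [e, m]; field_simp; ring
  have hset : {x : ℝ | a * x ^ 2 + b * x + c ∈ Set.Icc x₁ x₂}
      = (· + m) ⁻¹' {y : ℝ | y ^ 2 ∈ Set.Icc ((x₁ - e) / a) ((x₂ - e) / a)} := by
    ext x
    simp only [Set.mem_ofPred_eq, Set.mem_preimage, Set.mem_Icc, hsq, div_le_iff₀ ha,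
      le_div_iff₀ ha]
    constructor <;> rintro ⟨h₁, h₂⟩ <;> constructor <;> linarith
  have hlen : (x₂ - e) / a - (x₁ - e) / a = (x₂ - x₁) / a := by ring
  rw [hset, measure_preimage_add_right, mul_div_assoc, ← Real.sqrt_div' _ ha.le, ← hlen]
  exact volume_setOf_sq_mem_Icc_le _ _

/-- For `a ≠ 0` and a bounded interval `I = [x₁,x₂]`, the Lebesgue measure of
`{x : a x² + b x + c ∈ I}` is at most an absolute constant times `|I|^{1/2}/|a|^{1/2}`. -/
theorem stmt_3 : ∃ C : ℝ, 0 < C ∧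
    ∀ (a b c x₁ x₂ : ℝ), a ≠ 0 →
      volume {x : ℝ | a * x ^ 2 + b * x + c ∈ Set.Icc x₁ x₂}
        ≤ ENNReal.ofReal (C * Real.sqrt (x₂ - x₁) / Real.sqrt |a|) := by
  refine ⟨2, two_pos, fun a b c x₁ x₂ ha => ?_⟩
  rcases ha.lt_or_gt with hneg | hpos
  · have hset : {x : ℝ | a * x ^ 2 + b * x + c ∈ Set.Icc x₁ x₂}
        = {x : ℝ | -a * x ^ 2 + -b * x + -c ∈ Set.Icc (-x₂) (-x₁)} := by
      ext x
      rw [Set.mem_ofPred_eq, Set.mem_ofPred_eq, ← Set.neg_mem_Icc_iff]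
      ring_nf
    rw [hset, abs_of_neg hneg]
    simpa only [sub_neg_eq_add, neg_add_eq_sub] using
      volume_setOf_quadratic_mem_Icc_le_of_pos (neg_pos.mpr hneg) (-b) (-c) (-x₂) (-x₁)
  · rw [abs_of_pos hpos]
    exact volume_setOf_quadratic_mem_Icc_le_of_pos hpos b c x₁ x₂
end

section
/- Let a ≠ 0, b, c be real numbers, I ⊆ ℝ a bounded interval, and λ ≥ 1. Then the measure (with respect to counting measure on λ⁻¹ℤ divided by λ) of {q ∈ λ⁻¹ℤ : a q² + b q + c ∈ I} is bounded by an absolute constant times ⟨|I|^{1/2}/|a|^{1/2}⟩. -/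
open MeasureTheory

lemma countIcc (u v : ℝ) :
    Measure.count {n : ℤ | (n:ℝ) ∈ Set.Icc u v} ≤ ENNReal.ofReal (v - u + 1) := by
  have hset : {n : ℤ | (n:ℝ) ∈ Set.Icc u v} = ↑(Finset.Icc ⌈u⌉ ⌊v⌋) := by
    ext n
    simp [Set.mem_Icc, Int.ceil_le, Int.le_floor]
  rw [hset, Measure.count_apply_finset, Int.card_Icc]
  rcases le_or_gt (⌊v⌋ + 1 - ⌈u⌉) 0 with h | h
  · rw [Int.toNat_of_nonpos h]
    simp
  · rw [← ENNReal.ofReal_natCast]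
    apply ENNReal.ofReal_le_ofReal
    have hf := Int.floor_le v
    have hc := Int.le_ceil u
    have h2 : ((⌊v⌋ + 1 - ⌈u⌉).toNat : ℝ) = ((⌊v⌋ : ℝ) + 1 - ⌈u⌉) := by
      exact_mod_cast congrArg (Int.cast : ℤ → ℝ) (Int.toNat_of_nonneg h.le)
    rw [h2]
    linarith

lemma sqrt_subadd (x y : ℝ) (hx : 0 ≤ x) (hy : 0 ≤ y) :
    Real.sqrt (x + y) ≤ Real.sqrt x + Real.sqrt y := by
  rw [← Real.sqrt_sq (by positivity : (0:ℝ) ≤ Real.sqrt x + Real.sqrt y)]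
  apply Real.sqrt_le_sqrt
  nlinarith [Real.sq_sqrt hx, Real.sq_sqrt hy, Real.sqrt_nonneg x, Real.sqrt_nonneg y]

lemma core (lam a b c x₁ x₂ : ℝ) (hlam : 1 ≤ lam) (ha : 0 < a) :
    Measure.count {n : ℤ | a * ((n:ℝ)/lam)^2 + b * ((n:ℝ)/lam) + c ∈ Set.Icc x₁ x₂}
      ≤ ENNReal.ofReal (2 * (lam * Real.sqrt ((x₂ - x₁)/a)) + 2) := by
  have hlam0 : (0:ℝ) < lam := lt_of_lt_of_le one_pos hlam
  obtain ⟨β, hβ⟩ : ∃ β : ℝ, β = b / (2*a) := ⟨_, rfl⟩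
  obtain ⟨c', hc'⟩ : ∃ c' : ℝ, c' = c - a*β^2 := ⟨_, rfl⟩
  obtain ⟨U, hU⟩ : ∃ U : ℝ, U = (x₁ - c')/a := ⟨_, rfl⟩
  obtain ⟨V, hV⟩ : ∃ V : ℝ, V = (x₂ - c')/a := ⟨_, rfl⟩
  obtain ⟨s, hs⟩ : ∃ s : ℝ, s = Real.sqrt (max U 0) := ⟨_, rfl⟩
  obtain ⟨sV, hsV⟩ : ∃ sV : ℝ, sV = Real.sqrt (max V 0) := ⟨_, rfl⟩
  obtain ⟨ℓ, hℓ⟩ : ∃ ℓ : ℝ, ℓ = Real.sqrt ((x₂ - x₁)/a) := ⟨_, rfl⟩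
  have hℓ0 : 0 ≤ ℓ := hℓ ▸ Real.sqrt_nonneg _
  have hs0 : 0 ≤ s := hs ▸ Real.sqrt_nonneg _
  have hsV0 : 0 ≤ sV := hsV ▸ Real.sqrt_nonneg _
  have hVU : V - U = (x₂ - x₁)/a := by rw [hV, hU]; ring
  have hkey : sV ≤ s + ℓ := by
    rcases le_or_gt ((x₂ - x₁)/a) 0 with hD | hD
    · have hVle : V ≤ U := by linarith
      have : sV ≤ s := by
        rw [hs, hsV]
        exact Real.sqrt_le_sqrt (max_le_max hVle le_rfl)
      linarith
    · calc sV ≤ Real.sqrt (max U 0 + (x₂ - x₁)/a) := by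
            rw [hsV]
            apply Real.sqrt_le_sqrt
            have h1 := le_max_left U 0
            refine max_le (by linarith) (by positivity)
        _ ≤ s + ℓ := by rw [hs, hℓ]; exact sqrt_subadd _ _ (le_max_right _ _) hD.le
  have hsub : {n : ℤ | a * ((n:ℝ)/lam)^2 + b * ((n:ℝ)/lam) + c ∈ Set.Icc x₁ x₂} ⊆
      {n : ℤ | (n:ℝ) ∈ Set.Icc (lam*(-β - sV)) (lam*(-β - sV) + lam*ℓ)} ∪
      {n : ℤ | (n:ℝ) ∈ Set.Icc (lam*(-β + s)) (lam*(-β + s) + lam*ℓ)} := by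
    intro n hn
    simp only [Set.mem_setOf_eq, Set.mem_Icc] at hn
    obtain ⟨q, hq⟩ : ∃ q : ℝ, q = (n:ℝ)/lam := ⟨_, rfl⟩
    rw [← hq] at hn
    have hnq : (n:ℝ) = lam * q := by rw [hq]; field_simp
    obtain ⟨t, ht⟩ : ∃ t : ℝ, t = q + β := ⟨_, rfl⟩
    have hid : a * q^2 + b*q + c = a * t^2 + c' := by
      rw [ht, hc', hβ]
      field_simp
      ring
    rw [hid] at hn
    have htU : U ≤ t^2 := by rw [hU, div_le_iff₀ ha]; nlinarith [hn.1]
    have htV : t^2 ≤ V := by rw [hV, le_div_iff₀ ha]; nlinarith [hn.2]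
    have h1 : s ≤ |t| := by
      rw [hs, ← Real.sqrt_sq_eq_abs]
      exact Real.sqrt_le_sqrt (max_le htU (sq_nonneg t))
    have h2 : |t| ≤ sV := by
      rw [hsV, ← Real.sqrt_sq_eq_abs]
      exact Real.sqrt_le_sqrt (le_max_of_le_left htV)
    have hints := mul_le_mul_of_nonneg_left hkey hlam0.le
    rcases le_or_gt 0 t with htpos | htneg
    · right
      simp only [Set.mem_setOf_eq, Set.mem_Icc, hnq]
      rw [abs_of_nonneg htpos] at h1 h2
      have e1 := mul_le_mul_of_nonneg_left h1 hlam0.le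
      have e2 := mul_le_mul_of_nonneg_left h2 hlam0.le
      rw [ht] at e1 e2
      constructor <;> linarith
    · left
      simp only [Set.mem_setOf_eq, Set.mem_Icc, hnq]
      rw [abs_of_neg htneg] at h1 h2
      have e1 := mul_le_mul_of_nonneg_left h1 hlam0.le
      have e2 := mul_le_mul_of_nonneg_left h2 hlam0.le
      rw [ht] at e1 e2
      constructor <;> linarith
  calc Measure.count {n : ℤ | a * ((n:ℝ)/lam)^2 + b * ((n:ℝ)/lam) + c ∈ Set.Icc x₁ x₂}
      ≤ Measure.count ({n : ℤ | (n:ℝ) ∈ Set.Icc (lam*(-β - sV)) (lam*(-β - sV) + lam*ℓ)} ∪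
        {n : ℤ | (n:ℝ) ∈ Set.Icc (lam*(-β + s)) (lam*(-β + s) + lam*ℓ)}) :=
        measure_mono hsub
    _ ≤ Measure.count {n : ℤ | (n:ℝ) ∈ Set.Icc (lam*(-β - sV)) (lam*(-β - sV) + lam*ℓ)} +
        Measure.count {n : ℤ | (n:ℝ) ∈ Set.Icc (lam*(-β + s)) (lam*(-β + s) + lam*ℓ)} :=
        measure_union_le _ _
    _ ≤ ENNReal.ofReal ((lam*(-β - sV) + lam*ℓ) - lam*(-β - sV) + 1) +
        ENNReal.ofReal ((lam*(-β + s) + lam*ℓ) - lam*(-β + s) + 1) :=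
        add_le_add (countIcc _ _) (countIcc _ _)
    _ ≤ ENNReal.ofReal (2 * (lam * Real.sqrt ((x₂ - x₁)/a)) + 2) := by
        rw [← ENNReal.ofReal_add (by nlinarith) (by nlinarith)]
        apply ENNReal.ofReal_le_ofReal
        rw [← hℓ]
        nlinarith

/-- Lattice version of the parabola measure estimate: for `a ≠ 0`, `λ ≥ 1` and a bounded
interval `I = [x₁,x₂]`, the measure (counting measure on `λ⁻¹ℤ` divided by `λ`) of
`{q ∈ λ⁻¹ℤ : a q² + b q + c ∈ I}` is at most an absolute constant times
`⟨|I|^{1/2}/|a|^{1/2}⟩` where `⟨x⟩ = (1+x²)^{1/2}`. -/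
theorem stmt_4 : ∃ C : ℝ, 0 < C ∧
    ∀ (lam : ℝ), 1 ≤ lam →
    ∀ (a b c x₁ x₂ : ℝ), a ≠ 0 →
      Measure.count {n : ℤ |
          a * ((n : ℝ) / lam) ^ 2 + b * ((n : ℝ) / lam) + c ∈ Set.Icc x₁ x₂}
          / ENNReal.ofReal lam
        ≤ ENNReal.ofReal (C * Real.sqrt (1 + (Real.sqrt (x₂ - x₁) / Real.sqrt |a|) ^ 2)) := by
  refine ⟨4, by norm_num, ?_⟩
  intro lam hlam a b c x₁ x₂ ha
  have hlam0 : (0:ℝ) < lam := lt_of_lt_of_le one_pos hlam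
  have hA : (0:ℝ) < |a| := abs_pos.mpr ha
  obtain ⟨L, hL⟩ : ∃ L : ℝ, L = Real.sqrt (x₂ - x₁) / Real.sqrt |a| := ⟨_, rfl⟩
  have hL0 : 0 ≤ L := by rw [hL]; positivity
  have hsq : Real.sqrt ((x₂ - x₁)/|a|) = L := by
    rw [hL]
    rcases le_or_gt 0 (x₂ - x₁) with h | h
    · exact Real.sqrt_div h _
    · rw [Real.sqrt_eq_zero_of_nonpos h.le,
        Real.sqrt_eq_zero_of_nonpos (div_nonpos_iff.mpr (Or.inr ⟨h.le, hA.le⟩)), zero_div]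
  have hcount : Measure.count {n : ℤ |
      a * ((n : ℝ) / lam) ^ 2 + b * ((n : ℝ) / lam) + c ∈ Set.Icc x₁ x₂}
      ≤ ENNReal.ofReal (2 * (lam * L) + 2) := by
    rcases lt_or_gt_of_ne ha with haneg | hapos
    · have hset : {n : ℤ | a * ((n:ℝ)/lam)^2 + b * ((n:ℝ)/lam) + c ∈ Set.Icc x₁ x₂} =
          {n : ℤ | (-a) * ((n:ℝ)/lam)^2 + (-b) * ((n:ℝ)/lam) + (-c) ∈ Set.Icc (-x₂) (-x₁)} := by
        ext n
        simp only [Set.mem_setOf_eq, Set.mem_Icc]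
        constructor <;> (intro h; constructor <;> linarith [h.1, h.2])
      rw [hset]
      have := core lam (-a) (-b) (-c) (-x₂) (-x₁) hlam (by linarith)
      convert this using 3
      rw [← hsq, abs_of_neg haneg]
      ring_nf
    · have := core lam a b c x₁ x₂ hlam hapos
      convert this using 3
      rw [← hsq, abs_of_pos hapos]
  calc Measure.count {n : ℤ |
        a * ((n : ℝ) / lam) ^ 2 + b * ((n : ℝ) / lam) + c ∈ Set.Icc x₁ x₂}
        / ENNReal.ofReal lam
      ≤ ENNReal.ofReal (2 * (lam * L) + 2) / ENNReal.ofReal lam :=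
        ENNReal.div_le_div_right hcount _
    _ = ENNReal.ofReal ((2 * (lam * L) + 2) / lam) :=
        (ENNReal.ofReal_div_of_pos hlam0).symm
    _ ≤ ENNReal.ofReal (4 * Real.sqrt (1 + L ^ 2)) := by
        apply ENNReal.ofReal_le_ofReal
        rw [div_le_iff₀ hlam0]
        have hS2 := Real.sq_sqrt (show (0:ℝ) ≤ 1 + L^2 by positivity)
        have hS0 := Real.sqrt_nonneg (1 + L^2)
        have hS1 : 1 ≤ Real.sqrt (1 + L^2) := by nlinarith
        have hSL : L ≤ Real.sqrt (1 + L^2) := by nlinarith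
        nlinarith [mul_le_mul_of_nonneg_left hSL (by linarith : (0:ℝ) ≤ 2*lam),
          mul_le_mul_of_nonneg_left hS1 (by linarith : (0:ℝ) ≤ 2*lam)]
    _ = ENNReal.ofReal (4 * Real.sqrt (1 + (Real.sqrt (x₂ - x₁) / Real.sqrt |a|) ^ 2)) := by
        rw [hL]
end

section
/- Let ζ₁ + ζ₂ + ζ₃ = 0 with ζᵢ = (ξᵢ, qᵢ), all ξᵢ ≠ 0, and let Ω := ω(ζ₁) + ω(ζ₂) + ω(ζ₃) with ω(ξ,q) = ξ³ + q²/ξ. Then the partial derivative of Ω with respect to q₁ (holding ξ₁, ξ₂, ξ = ξ₁+ξ₂, q fixed, with q₂ = q − q₁) satisfies |∂Ω/∂q₁| = 2|q₁/ξ₁ − (q−q₁)/(ξ−ξ₁)| and moreover |∂Ω/∂q₁|² = 4·(ξ/(ξ₁(ξ−ξ₁)))·(Ω + 3ξ₁(ξ−ξ₁)ξ) whenever the right-hand side is nonnegative. -/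
/-! The cubic parts of `Ω` sum to `ξ₁³ + ξ₂³ − ξ³ = −3ξ₁ξ₂ξ` and the quadratic parts to
`q₁²/ξ₁ + q₂²/ξ₂ − q²/ξ = (ξ₁ξ₂/ξ)·(q₁/ξ₁ − q₂/ξ₂)²` (with `ξ₂ = ξ − ξ₁`, `q₂ = q − q₁`), while
`∂Ω/∂q₁ = 2(q₁/ξ₁ − q₂/ξ₂)`. -/

noncomputable def dispersion (ξ q : ℝ) : ℝ := ξ ^ 3 + q ^ 2 / ξ

noncomputable def resonance (ξ₁ ξ q q₁ : ℝ) : ℝ :=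
  dispersion ξ₁ q₁ + dispersion (ξ - ξ₁) (q - q₁) + dispersion (-ξ) (-q)

theorem hasDerivAt_dispersion (ξ q : ℝ) : HasDerivAt (dispersion ξ) (2 * q / ξ) q := by
  refine (((hasDerivAt_pow 2 q).div_const ξ).const_add (ξ ^ 3)).congr_deriv ?_
  norm_num

theorem hasDerivAt_resonance (ξ₁ ξ q q₁ : ℝ) :
    HasDerivAt (resonance ξ₁ ξ q) (2 * (q₁ / ξ₁ - (q - q₁) / (ξ - ξ₁))) q₁ := by
  have hq₂ : HasDerivAt (fun s => dispersion (ξ - ξ₁) (q - s)) (2 * (q - q₁) / (ξ - ξ₁) * -1) q₁ :=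
    (hasDerivAt_dispersion (ξ - ξ₁) (q - q₁)).comp q₁ ((hasDerivAt_id q₁).const_sub q)
  exact (((hasDerivAt_dispersion ξ₁ q₁).add hq₂).add_const (dispersion (-ξ) (-q))).congr_deriv
    (by ring)

theorem resonance_add_eq (ξ₁ ξ q q₁ : ℝ) (hξ₁ : ξ₁ ≠ 0) (hξ₂ : ξ - ξ₁ ≠ 0) (hξ : ξ ≠ 0) :
    resonance ξ₁ ξ q q₁ + 3 * ξ₁ * (ξ - ξ₁) * ξ
      = ξ₁ * (ξ - ξ₁) / ξ * (q₁ / ξ₁ - (q - q₁) / (ξ - ξ₁)) ^ 2 := by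
  simp only [resonance, dispersion]
  field_simp
  ring

/-- With `ω(ξ,q) = ξ³ + q²/ξ` and `Ω = ω(ξ₁,q₁) + ω(ξ−ξ₁,q−q₁) + ω(−ξ,−q)` viewed as a
function of `q₁`, its derivative satisfies `∂Ω/∂q₁ = 2(q₁/ξ₁ − (q−q₁)/(ξ−ξ₁))`, hence
`|∂Ω/∂q₁| = 2|q₁/ξ₁ − (q−q₁)/(ξ−ξ₁)|`, and moreover
`|∂Ω/∂q₁|² = 4·(ξ/(ξ₁(ξ−ξ₁)))·(Ω + 3ξ₁(ξ−ξ₁)ξ)`. -/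
theorem stmt_8 (ξ₁ ξ q q₁ : ℝ) (h1 : ξ₁ ≠ 0) (h2 : ξ - ξ₁ ≠ 0) (h3 : ξ ≠ 0) :
    HasDerivAt (fun s : ℝ => (ξ₁ ^ 3 + s ^ 2 / ξ₁) + ((ξ - ξ₁) ^ 3 + (q - s) ^ 2 / (ξ - ξ₁))
        + ((-ξ) ^ 3 + (-q) ^ 2 / (-ξ)))
      (2 * (q₁ / ξ₁ - (q - q₁) / (ξ - ξ₁))) q₁
    ∧ |2 * (q₁ / ξ₁ - (q - q₁) / (ξ - ξ₁))| = 2 * |q₁ / ξ₁ - (q - q₁) / (ξ - ξ₁)|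
    ∧ (2 * (q₁ / ξ₁ - (q - q₁) / (ξ - ξ₁))) ^ 2
        = 4 * (ξ / (ξ₁ * (ξ - ξ₁))) *
            (((ξ₁ ^ 3 + q₁ ^ 2 / ξ₁) + ((ξ - ξ₁) ^ 3 + (q - q₁) ^ 2 / (ξ - ξ₁))
              + ((-ξ) ^ 3 + (-q) ^ 2 / (-ξ))) + 3 * ξ₁ * (ξ - ξ₁) * ξ) := by
  refine ⟨hasDerivAt_resonance ξ₁ ξ q q₁, by rw [abs_mul, abs_two], ?_⟩
  change _ = 4 * (ξ / (ξ₁ * (ξ - ξ₁))) * (resonance ξ₁ ξ q q₁ + 3 * ξ₁ * (ξ - ξ₁) * ξ)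
  rw [resonance_add_eq ξ₁ ξ q q₁ h1 h2 h3]
  field_simp
  ring
end

section
/- Let p(ξ,q) := ⟨⟨ξ⟩⁻¹ q/ξ⟩ with ⟨x⟩ = (1+x²)^{1/2}. Suppose M₁, M₂, M₃ > 0 with M₁ ≲ M₃, |ξ₁| ~ M₁, |ξ₂| ~ M₂, |ξ₁+ξ₂| ~ M₃, and M₂ ~ M₃. Then there is an absolute constant C such that p(ξ₁+ξ₂, q₁+q₂) ≤ C·(p(ξ₂,q₂) + (M₁(1∨M₁)/M₃²)·p(ξ₁,q₁)), where 1∨M₁ = max(1,M₁). -/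
noncomputable def kpWeight (ξ q : ℝ) : ℝ :=
  Real.sqrt (1 + ((Real.sqrt (1 + ξ ^ 2))⁻¹ * (q / ξ)) ^ 2)

lemma one_le_kpWeight (ξ q : ℝ) : 1 ≤ kpWeight ξ q := by
  have h : Real.sqrt 1 ≤ Real.sqrt (1 + ((Real.sqrt (1 + ξ ^ 2))⁻¹ * (q / ξ)) ^ 2) :=
    Real.sqrt_le_sqrt (le_add_of_nonneg_right (sq_nonneg _))
  simpa [kpWeight] using h

lemma abs_kp_arg (ξ q : ℝ) :
    |(Real.sqrt (1 + ξ ^ 2))⁻¹ * (q / ξ)| = |q| / (|ξ| * Real.sqrt (1 + ξ ^ 2)) := by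
  have h : (0:ℝ) < Real.sqrt (1 + ξ ^ 2) := Real.sqrt_pos.2 (by positivity)
  rw [abs_mul, abs_inv, abs_div, abs_of_pos h]
  field_simp

lemma kpWeight_le (ξ q : ℝ) :
    kpWeight ξ q ≤ 1 + |q| / (|ξ| * Real.sqrt (1 + ξ ^ 2)) := by
  rw [kpWeight, ← abs_kp_arg]
  set x := (Real.sqrt (1 + ξ ^ 2))⁻¹ * (q / ξ)
  have h : Real.sqrt (1 + x ^ 2) ≤ Real.sqrt ((1 + |x|) ^ 2) :=
    Real.sqrt_le_sqrt (by nlinarith [abs_nonneg x, sq_abs x])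
  rwa [Real.sqrt_sq (by positivity)] at h

lemma le_kpWeight (ξ q : ℝ) :
    |q| / (|ξ| * Real.sqrt (1 + ξ ^ 2)) ≤ kpWeight ξ q := by
  rw [kpWeight, ← abs_kp_arg]
  set x := (Real.sqrt (1 + ξ ^ 2))⁻¹ * (q / ξ)
  have h : Real.sqrt (x ^ 2) ≤ Real.sqrt (1 + x ^ 2) := Real.sqrt_le_sqrt (by nlinarith)
  rwa [Real.sqrt_sq_eq_abs] at h

set_option maxHeartbeats 1000000 in
/-- In the regime `|ξ₁| ~ M₁`, `|ξ₂| ~ M₂`, `|ξ₁+ξ₂| ~ M₃`, `M₂ ~ M₃`, `M₁ ≲ M₃`, one has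
`p(ξ₁+ξ₂, q₁+q₂) ≤ C (p(ξ₂,q₂) + (M₁(1∨M₁)/M₃²) p(ξ₁,q₁))` for an absolute constant `C`. -/
theorem stmt_10 : ∃ C : ℝ, 0 < C ∧
    ∀ (M₁ M₂ M₃ ξ₁ ξ₂ q₁ q₂ : ℝ),
      0 < M₁ → 0 < M₂ → 0 < M₃ → M₁ ≤ M₃ →
      M₁ / 2 ≤ |ξ₁| → |ξ₁| ≤ 2 * M₁ →
      M₂ / 2 ≤ |ξ₂| → |ξ₂| ≤ 2 * M₂ →
      M₃ / 2 ≤ |ξ₁ + ξ₂| → |ξ₁ + ξ₂| ≤ 2 * M₃ →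
      M₂ / 2 ≤ M₃ → M₃ ≤ 2 * M₂ →
      kpWeight (ξ₁ + ξ₂) (q₁ + q₂)
        ≤ C * (kpWeight ξ₂ q₂ + M₁ * max 1 M₁ / M₃ ^ 2 * kpWeight ξ₁ q₁) := by
  refine ⟨65, by norm_num, ?_⟩
  intro M₁ M₂ M₃ ξ₁ ξ₂ q₁ q₂ hM₁ hM₂ hM₃ h13 h1l h1u h2l h2u h3l h3u h23l h23u
  set ξ₃ := ξ₁ + ξ₂ with hξ₃
  set c := M₁ * max 1 M₁ / M₃ ^ 2 with hc
  have hmax : (1:ℝ) ≤ max 1 M₁ := le_max_left _ _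
  have hmax1 : M₁ ≤ max 1 M₁ := le_max_right _ _
  have hcpos : 0 < c := by positivity
  -- sqrt bounds
  have sq1 : ∀ ξ : ℝ, |ξ| ≤ Real.sqrt (1 + ξ ^ 2) := by
    intro ξ
    rw [← Real.sqrt_sq_eq_abs]
    exact Real.sqrt_le_sqrt (by nlinarith)
  have sq2 : ∀ ξ : ℝ, Real.sqrt (1 + ξ ^ 2) ≤ 1 + |ξ| := by
    intro ξ
    have h : Real.sqrt (1 + ξ ^ 2) ≤ Real.sqrt ((1 + |ξ|) ^ 2) :=
      Real.sqrt_le_sqrt (by nlinarith [abs_nonneg ξ, sq_abs ξ])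
    rwa [Real.sqrt_sq (by positivity)] at h
  set S₁ := |ξ₁| * Real.sqrt (1 + ξ₁ ^ 2) with hS₁
  set S₂ := |ξ₂| * Real.sqrt (1 + ξ₂ ^ 2) with hS₂
  set D₃ := |ξ₃| * Real.sqrt (1 + ξ₃ ^ 2) with hD₃
  have hS₁pos : 0 < S₁ := mul_pos (by linarith) (Real.sqrt_pos.2 (by positivity))
  have hS₂pos : 0 < S₂ := mul_pos (by linarith) (Real.sqrt_pos.2 (by positivity))
  have hD₃pos : 0 < D₃ := mul_pos (by linarith) (Real.sqrt_pos.2 (by positivity))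
  -- D₃ ≥ M₃²/4
  have hD3 : M₃ ^ 2 / 4 ≤ D₃ := by
    have h := sq1 ξ₃
    have : M₃ / 2 * (M₃ / 2) ≤ |ξ₃| * Real.sqrt (1 + ξ₃ ^ 2) :=
      mul_le_mul h3l (le_trans h3l h) (by linarith) (abs_nonneg _)
    nlinarith
  -- S₁ ≤ 6 M₁ max(1,M₁)
  have hS1 : S₁ ≤ 6 * (M₁ * max 1 M₁) := by
    have h := sq2 ξ₁
    have h' : Real.sqrt (1 + ξ₁ ^ 2) ≤ 3 * max 1 M₁ := by linarith
    have : S₁ ≤ 2 * M₁ * (3 * max 1 M₁) :=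
      mul_le_mul h1u h' (Real.sqrt_nonneg _) (by positivity)
    linarith
  -- S₂ ≤ 64 D₃
  have hS2 : S₂ ≤ 64 * D₃ := by
    have h28 : |ξ₂| ≤ 8 * |ξ₃| := by linarith
    have hs : Real.sqrt (1 + ξ₂ ^ 2) ≤ 8 * Real.sqrt (1 + ξ₃ ^ 2) := by
      have h : Real.sqrt (1 + ξ₂ ^ 2) ≤ Real.sqrt (64 * (1 + ξ₃ ^ 2)) := by
        apply Real.sqrt_le_sqrt
        nlinarith [sq_abs ξ₂, sq_abs ξ₃, abs_nonneg ξ₂, abs_nonneg ξ₃]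
      rwa [show (64:ℝ) * (1 + ξ₃ ^ 2) = 8 ^ 2 * (1 + ξ₃ ^ 2) by ring,
        Real.sqrt_mul (by norm_num), Real.sqrt_sq (by norm_num)] at h
    calc S₂ ≤ 8 * |ξ₃| * (8 * Real.sqrt (1 + ξ₃ ^ 2)) :=
          mul_le_mul h28 hs (Real.sqrt_nonneg _) (by positivity)
      _ = 64 * D₃ := by rw [hD₃]; ring
  -- numerator bounds
  have hq1 : |q₁| ≤ kpWeight ξ₁ q₁ * S₁ := by
    have h := le_kpWeight ξ₁ q₁
    rwa [div_le_iff₀ hS₁pos] at h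
  have hq2 : |q₂| ≤ kpWeight ξ₂ q₂ * S₂ := by
    have h := le_kpWeight ξ₂ q₂
    rwa [div_le_iff₀ hS₂pos] at h
  have hk1 := one_le_kpWeight ξ₁ q₁
  have hk2 := one_le_kpWeight ξ₂ q₂
  have hcM : c * M₃ ^ 2 = M₁ * max 1 M₁ := by
    rw [hc]; field_simp
  -- the main division bound
  have key : |q₁ + q₂| / D₃ ≤ 64 * kpWeight ξ₂ q₂ + 24 * c * kpWeight ξ₁ q₁ := by
    rw [div_le_iff₀ hD₃pos]
    have habs : |q₁ + q₂| ≤ |q₁| + |q₂| := abs_add_le _ _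
    have hk1' : (0:ℝ) ≤ kpWeight ξ₁ q₁ := by linarith
    have hk2' : (0:ℝ) ≤ kpWeight ξ₂ q₂ := by linarith
    have hM3D : M₃ ^ 2 ≤ 4 * D₃ := by linarith
    have hb1 : |q₁| ≤ 24 * c * kpWeight ξ₁ q₁ * D₃ := by
      have h1 : |q₁| ≤ kpWeight ξ₁ q₁ * (6 * (M₁ * max 1 M₁)) :=
        le_trans hq1 (mul_le_mul_of_nonneg_left hS1 hk1')
      rw [← hcM] at h1
      have h2 : c * M₃ ^ 2 ≤ c * (4 * D₃) := mul_le_mul_of_nonneg_left hM3D hcpos.le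
      have h3 : kpWeight ξ₁ q₁ * (6 * (c * M₃ ^ 2)) ≤ kpWeight ξ₁ q₁ * (6 * (c * (4 * D₃))) :=
        mul_le_mul_of_nonneg_left (by linarith) hk1'
      calc |q₁| ≤ kpWeight ξ₁ q₁ * (6 * (c * (4 * D₃))) := by linarith
        _ = 24 * c * kpWeight ξ₁ q₁ * D₃ := by ring
    have hb2 : |q₂| ≤ 64 * kpWeight ξ₂ q₂ * D₃ := by
      calc |q₂| ≤ kpWeight ξ₂ q₂ * S₂ := hq2
        _ ≤ kpWeight ξ₂ q₂ * (64 * D₃) := mul_le_mul_of_nonneg_left hS2 hk2'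
        _ = 64 * kpWeight ξ₂ q₂ * D₃ := by ring
    calc |q₁ + q₂| ≤ 64 * kpWeight ξ₂ q₂ * D₃ + 24 * c * kpWeight ξ₁ q₁ * D₃ := by linarith
      _ = (64 * kpWeight ξ₂ q₂ + 24 * c * kpWeight ξ₁ q₁) * D₃ := by ring
  have hup := kpWeight_le ξ₃ (q₁ + q₂)
  rw [← hD₃] at hup
  have hfin : kpWeight ξ₃ (q₁ + q₂) ≤ 1 + (64 * kpWeight ξ₂ q₂ + 24 * c * kpWeight ξ₁ q₁) :=
    le_trans hup (by linarith)
  have hck : 0 ≤ c * kpWeight ξ₁ q₁ := by positivity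
  have hexp : (65:ℝ) * (kpWeight ξ₂ q₂ + c * kpWeight ξ₁ q₁)
      = 65 * kpWeight ξ₂ q₂ + 65 * (c * kpWeight ξ₁ q₁) := by ring
  rw [hexp]
  linarith [hfin, hk2, hck]
end

section
/- Let f₁, f₂, f₃ ∈ L²(ℝ² × λ⁻¹ℤ) be such that supp fᵢ ⊆ {(τ,ξ,q) : |ξ| ~ Mᵢ, ⟨τ − ω(ξ,q)⟩ ≲ Kᵢ, q ∈ Iᵢ} where Iᵢ ⊆ λ⁻¹ℤ. Then |∫ (f₁ ⋆ f₂) · f₃| ≲ M_min^{1/2} K_min^{1/2} |I|_min^{1/2} ∏ᵢ ‖fᵢ‖_{L²}, where M_min, K_min, |I|_min are the minima of the Mᵢ, Kᵢ, and the measures of the Iᵢ. -/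
open MeasureTheory

/-- The dispersion relation `ω(ξ,q) = ξ³ + q²/ξ` of KP-I. -/
noncomputable def kpOmega (ξ q : ℝ) : ℝ := ξ ^ 3 + q ^ 2 / ξ

/-- The measure on `ℝ² × λ⁻¹ℤ`, the lattice being modeled by `ℤ` (with `n ↦ n/λ`)
carrying the counting measure divided by `λ`. -/
noncomputable def kpMeasure (lam : ℝ) : Measure (ℝ × ℝ × ℤ) :=
  (volume : Measure ℝ).prod
    ((volume : Measure ℝ).prod ((ENNReal.ofReal lam)⁻¹ • (Measure.count : Measure ℤ)))

/-!
Write `gᵢ = ‖fᵢ‖`. The left-hand side is at most the trilinear form `∫∫ g₁(s) g₂(t) g₃(s + t)`.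
On a group with an invariant measure this form is at most `|supp gᵢ|^{1/2} ‖g₁‖₂ ‖g₂‖₂ ‖g₃‖₂`
for each `i`: Cauchy–Schwarz in the inner variable, then against the indicator of the support
in the outer one; the three slots are permuted by `s ↔ t` and `(s, t) ↦ (s + t, -t)`.
On a product `A × X`, applying this on every `A`-fibre leaves the same form on `X` for the fibre
norms `x ↦ ‖u(·, x)‖₂`, whose `L²` norms are those of `u`. Peeling off `τ`, then `ξ`, then `q`
produces the factors `(2 K_min)^{1/2}`, `(4 M_min)^{1/2}` and `L_min^{1/2}`: the `τ`-fibres have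
length at most `2 Kᵢ` because `|τ - ω| ≤ ⟨τ - ω⟩`, the `ξ`-supports lie in `[-2 Mᵢ, 2 Mᵢ]`, and the
`q`-supports in `Iᵢ`.
-/

open Function Set
open scoped ENNReal

section L2

variable {α : Type*} [MeasurableSpace α] {μ : Measure α}

lemma eLpNorm_two_eq_lintegral (u : α → ℝ≥0∞) :
    eLpNorm u 2 μ = (∫⁻ x, u x ^ (2 : ℝ) ∂μ) ^ (1 / 2 : ℝ) := by
  simp [eLpNorm_eq_lintegral_rpow_enorm_toReal two_ne_zero ENNReal.ofNat_ne_top]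

lemma lintegral_mul_le_eLpNorm_two_mul {u v : α → ℝ≥0∞} (hu : AEMeasurable u μ)
    (hv : AEMeasurable v μ) :
    ∫⁻ x, u x * v x ∂μ ≤ eLpNorm u 2 μ * eLpNorm v 2 μ := by
  simpa [eLpNorm_two_eq_lintegral] using
    ENNReal.lintegral_mul_le_Lp_mul_Lq μ Real.HolderConjugate.two_two hu hv

lemma lintegral_le_measure_support_mul_eLpNorm {u : α → ℝ≥0∞} (hu : Measurable u) :
    ∫⁻ x, u x ∂μ ≤ μ (support u) ^ (1 / 2 : ℝ) * eLpNorm u 2 μ := by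
  have hS : MeasurableSet (support u) := measurableSet_support hu
  calc ∫⁻ x, u x ∂μ = ∫⁻ x, (support u).indicator (fun _ => 1) x * u x ∂μ := by
        refine lintegral_congr fun x => ?_
        by_cases hx : x ∈ support u
        · simp [hx]
        · simp [hx, notMem_support.mp hx]
    _ ≤ eLpNorm ((support u).indicator fun _ => 1) 2 μ * eLpNorm u 2 μ :=
        lintegral_mul_le_eLpNorm_two_mul
          ((measurable_const.indicator hS).aemeasurable) hu.aemeasurable
    _ = μ (support u) ^ (1 / 2 : ℝ) * eLpNorm u 2 μ := by
        simp [eLpNorm_indicator_const hS two_ne_zero ENNReal.ofNat_ne_top]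

lemma ENNReal.ofReal_rpow_half (x : ℝ) : ENNReal.ofReal x ^ (1 / 2 : ℝ) = ENNReal.ofReal √x := by
  rcases le_total 0 x with hx | hx
  · rw [ENNReal.ofReal_rpow_of_nonneg hx (by norm_num), Real.sqrt_eq_rpow]
  · simp [ENNReal.ofReal_of_nonpos hx, Real.sqrt_eq_zero_of_nonpos hx]

lemma eLpNorm_two_eq_ofReal_sqrt {f : α → ℝ} (hf : Integrable (fun x => f x ^ 2) μ) :
    eLpNorm f 2 μ = ENNReal.ofReal √(∫ x, f x ^ 2 ∂μ) := by
  rw [← ENNReal.ofReal_rpow_half, ofReal_integral_eq_lintegral_ofReal hf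
    (Filter.Eventually.of_forall fun x => sq_nonneg (f x)),
    eLpNorm_eq_lintegral_rpow_enorm_toReal two_ne_zero ENNReal.ofNat_ne_top]
  congr 2 with x
  rw [← ofReal_norm, ENNReal.toReal_ofNat,
    ENNReal.ofReal_rpow_of_nonneg (norm_nonneg _) zero_le_two]
  simp

end L2

instance MeasureTheory.Measure.isNegInvariant_smul {G : Type*} [MeasurableSpace G] [Neg G]
    (μ : Measure G) [μ.IsNegInvariant] (c : ℝ≥0∞) : (c • μ).IsNegInvariant :=
  ⟨by rw [Measure.neg_def, Measure.map_smul, ← Measure.neg_def, Measure.neg_eq_self]⟩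

section ConvForm

variable {G : Type*} [AddCommGroup G] [MeasurableSpace G] [MeasurableAdd₂ G]

noncomputable def convForm (μ : Measure G) (u v w : G → ℝ≥0∞) : ℝ≥0∞ :=
  ∫⁻ s, ∫⁻ t, u s * v t * w (s + t) ∂μ ∂μ

variable {μ : Measure G} {u v w : G → ℝ≥0∞}

lemma convForm_le_measure_support_left [μ.IsAddLeftInvariant]
    (hu : Measurable u) (hv : Measurable v) (hw : Measurable w) :
    convForm μ u v w
      ≤ μ (support u) ^ (1 / 2 : ℝ) * (eLpNorm u 2 μ * eLpNorm v 2 μ * eLpNorm w 2 μ) := by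
  have hinner (s : G) : ∫⁻ t, v t * w (s + t) ∂μ ≤ eLpNorm v 2 μ * eLpNorm w 2 μ := by
    have hws : eLpNorm (fun t => w (s + t)) 2 μ = eLpNorm w 2 μ :=
      eLpNorm_comp_measurePreserving (g := w) hw.aestronglyMeasurable
        (measurePreserving_add_left μ s)
    rw [← hws]
    exact lintegral_mul_le_eLpNorm_two_mul hv.aemeasurable
      (hw.comp (measurable_const_add s)).aemeasurable
  calc convForm μ u v w = ∫⁻ s, u s * ∫⁻ t, v t * w (s + t) ∂μ ∂μ := by
        refine lintegral_congr fun s => ?_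
        simp_rw [mul_assoc]
        exact lintegral_const_mul _ (by fun_prop)
    _ ≤ ∫⁻ s, u s * (eLpNorm v 2 μ * eLpNorm w 2 μ) ∂μ := by gcongr with s; exact hinner s
    _ = (∫⁻ s, u s ∂μ) * (eLpNorm v 2 μ * eLpNorm w 2 μ) := lintegral_mul_const _ hu
    _ ≤ μ (support u) ^ (1 / 2 : ℝ) * eLpNorm u 2 μ * (eLpNorm v 2 μ * eLpNorm w 2 μ) := by
        gcongr; exact lintegral_le_measure_support_mul_eLpNorm hu
    _ = _ := by ring

variable [SFinite μ]

lemma convForm_comm (hu : Measurable u) (hv : Measurable v) (hw : Measurable w) :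
    convForm μ u v w = convForm μ v u w := by
  unfold convForm
  rw [lintegral_lintegral_swap (by fun_prop)]
  simp only [add_comm, mul_comm (u _)]

variable [μ.IsAddLeftInvariant] [MeasurableSub₂ G]

lemma lintegral_conv_mul_eq_convForm (hu : Measurable u) (hv : Measurable v) (hw : Measurable w) :
    ∫⁻ p, (∫⁻ p', u (p - p') * v p' ∂μ) * w p ∂μ = convForm μ u v w := by
  calc ∫⁻ p, (∫⁻ p', u (p - p') * v p' ∂μ) * w p ∂μ
      = ∫⁻ p, ∫⁻ p', u (p - p') * v p' * w p ∂μ ∂μ :=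
        lintegral_congr fun p => (lintegral_mul_const _ (by fun_prop)).symm
    _ = ∫⁻ p', ∫⁻ p, u (p - p') * v p' * w p ∂μ ∂μ := lintegral_lintegral_swap (by fun_prop)
    _ = ∫⁻ p', ∫⁻ s, u s * v p' * w (s + p') ∂μ ∂μ := by
        refine lintegral_congr fun p' => ?_
        rw [← lintegral_add_right_eq_self (fun p => u (p - p') * v p' * w p) p']
        simp only [add_sub_cancel_right]
    _ = convForm μ u v w := lintegral_lintegral_swap (by fun_prop)

lemma enorm_integral_conv_mul_le {𝕜 : Type*} [RCLike 𝕜] {f₁ f₂ f₃ : G → 𝕜}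
    (hf₁ : Measurable f₁) (hf₂ : Measurable f₂) (hf₃ : Measurable f₃) :
    ‖∫ p, (∫ p', f₁ (p - p') * f₂ p' ∂μ) * f₃ p ∂μ‖ₑ
      ≤ convForm μ (‖f₁ ·‖ₑ) (‖f₂ ·‖ₑ) (‖f₃ ·‖ₑ) := by
  calc ‖∫ p, (∫ p', f₁ (p - p') * f₂ p' ∂μ) * f₃ p ∂μ‖ₑ
      ≤ ∫⁻ p, ‖∫ p', f₁ (p - p') * f₂ p' ∂μ‖ₑ * ‖f₃ p‖ₑ ∂μ := by
        simpa only [enorm_mul] using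
          enorm_integral_le_lintegral_enorm fun p => (∫ p', f₁ (p - p') * f₂ p' ∂μ) * f₃ p
    _ ≤ ∫⁻ p, (∫⁻ p', ‖f₁ (p - p')‖ₑ * ‖f₂ p'‖ₑ ∂μ) * ‖f₃ p‖ₑ ∂μ := by
        gcongr with p
        simpa only [enorm_mul] using
          enorm_integral_le_lintegral_enorm (μ := μ) fun p' => f₁ (p - p') * f₂ p'
    _ = convForm μ (‖f₁ ·‖ₑ) (‖f₂ ·‖ₑ) (‖f₃ ·‖ₑ) :=
        lintegral_conv_mul_eq_convForm hf₁.enorm hf₂.enorm hf₃.enorm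

lemma convForm_eq_convForm_neg (hu : Measurable u) (hv : Measurable v) (hw : Measurable w) :
    convForm μ u v w = convForm μ w (fun t => v (-t)) u := by
  unfold convForm
  calc ∫⁻ s, ∫⁻ t, u s * v t * w (s + t) ∂μ ∂μ
      = ∫⁻ s, ∫⁻ r, w r * v (r - s) * u s ∂μ ∂μ := by
        refine lintegral_congr fun s => ?_
        rw [← lintegral_add_left_eq_self (fun r => w r * v (r - s) * u s) s]
        refine lintegral_congr fun t => ?_
        rw [add_sub_cancel_left]
        ring
    _ = ∫⁻ r, ∫⁻ s, w r * v (r - s) * u s ∂μ ∂μ := lintegral_lintegral_swap (by fun_prop)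
    _ = ∫⁻ r, ∫⁻ t, w r * v (-t) * u (r + t) ∂μ ∂μ := by
        refine lintegral_congr fun r => ?_
        rw [← lintegral_add_left_eq_self (fun s => w r * v (r - s) * u s) r]
        simp only [sub_add_cancel_left]

variable [MeasurableNeg G] [μ.IsNegInvariant]

lemma convForm_le_min {a b c : ℝ≥0∞} (hu : Measurable u) (hv : Measurable v) (hw : Measurable w)
    (ha : μ (support u) ≤ a) (hb : μ (support v) ≤ b) (hc : μ (support w) ≤ c) :
    convForm μ u v w
      ≤ min a (min b c) ^ (1 / 2 : ℝ) * (eLpNorm u 2 μ * eLpNorm v 2 μ * eLpNorm w 2 μ) := by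
  rcases min_cases a (min b c) with ⟨h, -⟩ | ⟨h, -⟩ <;> rw [h]
  · calc convForm μ u v w ≤ _ := convForm_le_measure_support_left hu hv hw
      _ ≤ _ := by gcongr
  rcases min_cases b c with ⟨h, -⟩ | ⟨h, -⟩ <;> rw [h]
  · calc convForm μ u v w = convForm μ v u w := convForm_comm hu hv hw
      _ ≤ μ (support v) ^ (1 / 2 : ℝ) * (eLpNorm v 2 μ * eLpNorm u 2 μ * eLpNorm w 2 μ) :=
          convForm_le_measure_support_left hv hu hw
      _ ≤ _ := by rw [mul_comm (eLpNorm v 2 μ)]; gcongr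
  · have hv' : eLpNorm (fun t => v (-t)) 2 μ = eLpNorm v 2 μ :=
      eLpNorm_comp_measurePreserving (g := v) hv.aestronglyMeasurable
        (Measure.measurePreserving_neg μ)
    calc convForm μ u v w = convForm μ w (fun t => v (-t)) u := convForm_eq_convForm_neg hu hv hw
      _ ≤ μ (support w) ^ (1 / 2 : ℝ)
            * (eLpNorm w 2 μ * eLpNorm (fun t => v (-t)) 2 μ * eLpNorm u 2 μ) :=
          convForm_le_measure_support_left hw (by fun_prop) hu
      _ = μ (support w) ^ (1 / 2 : ℝ) * (eLpNorm u 2 μ * eLpNorm v 2 μ * eLpNorm w 2 μ) := by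
          rw [hv']; ring
      _ ≤ _ := by gcongr

end ConvForm

section Fiber

variable {A X : Type*} [MeasurableSpace A] {μ : Measure A}

noncomputable def fiberNorm (μ : Measure A) (u : A × X → ℝ≥0∞) (x : X) : ℝ≥0∞ :=
  eLpNorm (fun s => u (s, x)) 2 μ

lemma support_fiberNorm_subset {u : A × X → ℝ≥0∞} {S : Set X} (h : ∀ p, u p ≠ 0 → p.2 ∈ S) :
    support (fiberNorm μ u) ⊆ S := by
  intro x hx
  by_contra hxS
  have hzero : (fun s => u (s, x)) = 0 := funext fun s => by_contra fun hs => hxS (h (s, x) hs)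
  exact hx (by simp [fiberNorm, hzero])

variable [MeasurableSpace X] {ν : Measure X} [SFinite μ]

lemma measurable_fiberNorm {u : A × X → ℝ≥0∞} (hu : Measurable u) :
    Measurable (fiberNorm μ u) := by
  unfold fiberNorm
  simp_rw [eLpNorm_two_eq_lintegral]
  exact (Measurable.lintegral_prod_left' (hu.pow_const (2 : ℝ))).pow_const _

lemma eLpNorm_fiberNorm [SFinite ν] {u : A × X → ℝ≥0∞} (hu : Measurable u) :
    eLpNorm (fiberNorm μ u) 2 ν = eLpNorm u 2 (μ.prod ν) := by
  simp_rw [eLpNorm_two_eq_lintegral, fiberNorm, eLpNorm_two_eq_lintegral, ← ENNReal.rpow_mul,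
    one_div_mul_cancel (two_ne_zero' ℝ), ENNReal.rpow_one]
  rw [lintegral_prod_symm _ (by fun_prop)]

lemma lintegral_prod_prod_comm [SFinite ν] {H : (A × X) × (A × X) → ℝ≥0∞} (hH : Measurable H) :
    ∫⁻ a, ∫⁻ b, H (a, b) ∂μ.prod ν ∂μ.prod ν
      = ∫⁻ xy, ∫⁻ st, H ((st.1, xy.1), (st.2, xy.2)) ∂μ.prod μ ∂ν.prod ν := by
  have hH' : Measurable fun p : (A × A) × (X × X) => H ((p.1.1, p.2.1), (p.1.2, p.2.2)) :=
    hH.comp (by fun_prop)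
  calc ∫⁻ a, ∫⁻ b, H (a, b) ∂μ.prod ν ∂μ.prod ν
      = ∫⁻ s, ∫⁻ x, ∫⁻ t, ∫⁻ y, H ((s, x), (t, y)) ∂ν ∂μ ∂ν ∂μ := by
        rw [lintegral_prod _ hH.lintegral_prod_right'.aemeasurable]
        refine lintegral_congr fun s => lintegral_congr fun x => ?_
        exact lintegral_prod _ (hH.comp (by fun_prop)).aemeasurable
    _ = ∫⁻ s, ∫⁻ t, ∫⁻ x, ∫⁻ y, H ((s, x), (t, y)) ∂ν ∂ν ∂μ ∂μ := by
        refine lintegral_congr fun s => lintegral_lintegral_swap ?_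
        exact (Measurable.lintegral_prod_right'
          (f := fun p : (X × A) × X => H ((s, p.1.1), (p.1.2, p.2)))
          (hH.comp (by fun_prop))).aemeasurable
    _ = ∫⁻ st, ∫⁻ xy, H ((st.1, xy.1), (st.2, xy.2)) ∂ν.prod ν ∂μ.prod μ := by
        rw [lintegral_prod _ hH'.lintegral_prod_right'.aemeasurable]
        refine lintegral_congr fun s => lintegral_congr fun t => ?_
        exact (lintegral_prod _ (hH'.comp (measurable_prodMk_left (x := (s, t)))).aemeasurable).symm
    _ = _ := lintegral_lintegral_swap hH'.aemeasurable

variable [SFinite ν] [AddCommGroup A] [AddCommGroup X] [MeasurableAdd₂ A] [MeasurableAdd₂ X]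

lemma convForm_prod_le {u v w : A × X → ℝ≥0∞} {U V W : X → ℝ≥0∞} {c : ℝ≥0∞}
    (hu : Measurable u) (hv : Measurable v) (hw : Measurable w)
    (hU : Measurable U) (hV : Measurable V) (hW : Measurable W)
    (h : ∀ x y, convForm μ (fun s => u (s, x)) (fun t => v (t, y)) (fun r => w (r, x + y))
      ≤ c * (U x * V y * W (x + y))) :
    convForm (μ.prod ν) u v w ≤ c * convForm ν U V W := by
  have hH : Measurable fun p : (A × X) × (A × X) =>
      u p.1 * v p.2 * w (p.1.1 + p.2.1, p.1.2 + p.2.2) := by fun_prop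
  calc convForm (μ.prod ν) u v w
      = ∫⁻ xy : X × X, ∫⁻ st : A × A,
          u (st.1, xy.1) * v (st.2, xy.2) * w (st.1 + st.2, xy.1 + xy.2) ∂μ.prod μ ∂ν.prod ν :=
        lintegral_prod_prod_comm hH
    _ ≤ ∫⁻ xy : X × X, c * (U xy.1 * V xy.2 * W (xy.1 + xy.2)) ∂ν.prod ν := by
        refine lintegral_mono fun xy => ?_
        rw [lintegral_prod _ (by fun_prop)]
        exact h xy.1 xy.2
    _ = c * convForm ν U V W := by
        rw [lintegral_const_mul _ (by fun_prop), lintegral_prod _ (by fun_prop)]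
        rfl

variable [μ.IsAddLeftInvariant] [MeasurableSub₂ A] [MeasurableNeg A] [μ.IsNegInvariant]

lemma convForm_prod_le_fiberNorm {u v w : A × X → ℝ≥0∞} {a b c : ℝ≥0∞}
    (hu : Measurable u) (hv : Measurable v) (hw : Measurable w)
    (ha : ∀ x, μ (support fun s => u (s, x)) ≤ a) (hb : ∀ x, μ (support fun s => v (s, x)) ≤ b)
    (hc : ∀ x, μ (support fun s => w (s, x)) ≤ c) :
    convForm (μ.prod ν) u v w
      ≤ min a (min b c) ^ (1 / 2 : ℝ)
        * convForm ν (fiberNorm μ u) (fiberNorm μ v) (fiberNorm μ w) :=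
  convForm_prod_le hu hv hw (measurable_fiberNorm hu) (measurable_fiberNorm hv)
    (measurable_fiberNorm hw) fun x y =>
      convForm_le_min (by fun_prop) (by fun_prop) (by fun_prop) (ha x) (hb y) (hc (x + y))

end Fiber

instance Prod.instMeasurableAdd₂ {A X : Type*} [MeasurableSpace A] [MeasurableSpace X] [Add A]
    [Add X] [MeasurableAdd₂ A] [MeasurableAdd₂ X] : MeasurableAdd₂ (A × X) :=
  ⟨(measurable_fst.fst.add measurable_snd.fst).prodMk (measurable_fst.snd.add measurable_snd.snd)⟩

section Iterated

variable {A B C : Type*} [MeasurableSpace A] [MeasurableSpace B] [MeasurableSpace C]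

def FiberSupportBounds (μ₁ : Measure A) (μ₂ : Measure B) (μ₃ : Measure C)
    (u : A × B × C → ℝ≥0∞) (a b c : ℝ≥0∞) : Prop :=
  (∀ x, μ₁ (support fun s => u (s, x)) ≤ a) ∧
  (∀ y, μ₂ (support fun s => fiberNorm μ₁ u (s, y)) ≤ b) ∧
  μ₃ (support (fiberNorm μ₂ (fiberNorm μ₁ u))) ≤ c

variable [AddCommGroup A] [AddCommGroup B] [AddCommGroup C]
  [MeasurableAdd₂ A] [MeasurableAdd₂ B] [MeasurableAdd₂ C]
  [MeasurableSub₂ A] [MeasurableSub₂ B] [MeasurableSub₂ C]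
  [MeasurableNeg A] [MeasurableNeg B] [MeasurableNeg C]
  {μ₁ : Measure A} {μ₂ : Measure B} {μ₃ : Measure C} [SFinite μ₁] [SFinite μ₂] [SFinite μ₃]
  [μ₁.IsAddLeftInvariant] [μ₂.IsAddLeftInvariant] [μ₃.IsAddLeftInvariant]
  [μ₁.IsNegInvariant] [μ₂.IsNegInvariant] [μ₃.IsNegInvariant]

theorem convForm_le_of_fiberSupportBounds {u v w : A × B × C → ℝ≥0∞}
    {a₁ a₂ a₃ b₁ b₂ b₃ c₁ c₂ c₃ : ℝ≥0∞}
    (hu : Measurable u) (hv : Measurable v) (hw : Measurable w)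
    (hU : FiberSupportBounds μ₁ μ₂ μ₃ u a₁ b₁ c₁) (hV : FiberSupportBounds μ₁ μ₂ μ₃ v a₂ b₂ c₂)
    (hW : FiberSupportBounds μ₁ μ₂ μ₃ w a₃ b₃ c₃) :
    convForm (μ₁.prod (μ₂.prod μ₃)) u v w
      ≤ min a₁ (min a₂ a₃) ^ (1 / 2 : ℝ) * (min b₁ (min b₂ b₃) ^ (1 / 2 : ℝ)
        * (min c₁ (min c₂ c₃) ^ (1 / 2 : ℝ) * (eLpNorm u 2 (μ₁.prod (μ₂.prod μ₃))
          * eLpNorm v 2 (μ₁.prod (μ₂.prod μ₃)) * eLpNorm w 2 (μ₁.prod (μ₂.prod μ₃))))) := by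
  have hu' := measurable_fiberNorm (μ := μ₁) hu
  have hv' := measurable_fiberNorm (μ := μ₁) hv
  have hw' := measurable_fiberNorm (μ := μ₁) hw
  calc convForm (μ₁.prod (μ₂.prod μ₃)) u v w
      ≤ min a₁ (min a₂ a₃) ^ (1 / 2 : ℝ)
          * convForm (μ₂.prod μ₃) (fiberNorm μ₁ u) (fiberNorm μ₁ v) (fiberNorm μ₁ w) :=
        convForm_prod_le_fiberNorm hu hv hw hU.1 hV.1 hW.1
    _ ≤ _ := by
        gcongr
        refine (convForm_prod_le_fiberNorm hu' hv' hw' hU.2.1 hV.2.1 hW.2.1).trans ?_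
        gcongr
        refine (convForm_le_min (measurable_fiberNorm hu') (measurable_fiberNorm hv')
          (measurable_fiberNorm hw') hU.2.2 hV.2.2 hW.2.2).trans_eq ?_
        simp only [eLpNorm_fiberNorm, hu, hv, hw, hu', hv', hw']

end Iterated

instance (lam : ℝ) : (kpMeasure lam).IsAddLeftInvariant := by
  -- instance search does not reach the inner product factor unaided
  have : ((volume : Measure ℝ).prod
      ((ENNReal.ofReal lam)⁻¹ • (Measure.count : Measure ℤ))).IsAddLeftInvariant := inferInstance
  exact Measure.prod.instIsAddLeftInvariant

instance (lam : ℝ) : SFinite (kpMeasure lam) := by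
  unfold kpMeasure; infer_instance

lemma fiberSupportBounds_kp {lam M K L : ℝ} {I : Set ℤ} {f : ℝ × ℝ × ℤ → ℝ}
    (hI : ((ENNReal.ofReal lam)⁻¹ • (Measure.count : Measure ℤ)) I ≤ ENNReal.ofReal L)
    (hf : ∀ p : ℝ × ℝ × ℤ, f p ≠ 0 → |p.2.1| ≤ 2 * M ∧
      √(1 + (p.1 - kpOmega p.2.1 ((p.2.2 : ℝ) / lam)) ^ 2) ≤ K ∧ p.2.2 ∈ I) :
    FiberSupportBounds volume volume ((ENNReal.ofReal lam)⁻¹ • Measure.count) (‖f ·‖ₑ)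
      (ENNReal.ofReal (2 * K)) (ENNReal.ofReal (4 * M)) (ENNReal.ofReal L) := by
  have hf' (p : ℝ × ℝ × ℤ) (hp : ‖f p‖ₑ ≠ 0) := hf p (enorm_ne_zero.mp hp)
  refine ⟨fun x => ?_, fun n => ?_, ?_⟩
  · set ω := kpOmega x.1 ((x.2 : ℝ) / lam)
    have hsupp : (support fun τ => ‖f (τ, x)‖ₑ) ⊆ Icc (ω - K) (ω + K) := fun τ hτ => by
      have hτω : |τ - ω| ≤ K := (Real.abs_le_sqrt (by linarith)).trans (hf' (τ, x) hτ).2.1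
      constructor <;> linarith [abs_le.mp hτω]
    refine (measure_mono hsupp).trans_eq ?_
    rw [Real.volume_Icc]; ring_nf
  · have hsupp : support (fiberNorm volume (‖f ·‖ₑ)) ⊆ {x | |x.1| ≤ 2 * M} :=
      support_fiberNorm_subset fun p hp => (hf' p hp).1
    have hsub : (support fun ξ => fiberNorm volume (‖f ·‖ₑ) (ξ, n)) ⊆ Icc (-(2 * M)) (2 * M) :=
      fun ξ hξ => abs_le.mp (hsupp hξ)
    refine (measure_mono hsub).trans_eq ?_
    rw [Real.volume_Icc]; ring_nf
  · refine (measure_mono (support_fiberNorm_subset fun y hy => ?_)).trans hI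
    exact support_fiberNorm_subset (S := {x : ℝ × ℤ | x.2 ∈ I}) (fun p hp => (hf' p hp).2.2) hy

lemma Real.sqrt_min_mul_left {c : ℝ} (hc : 0 ≤ c) (a b d : ℝ) :
    √(min (c * a) (min (c * b) (c * d))) = √c * √(min a (min b d)) := by
  rw [← mul_min_of_nonneg _ _ hc, ← mul_min_of_nonneg _ _ hc, Real.sqrt_mul hc]

/-- Basic trilinear estimate: if `supp fᵢ ⊆ {|ξ| ~ Mᵢ, ⟨τ − ω(ξ,q)⟩ ≤ Kᵢ, q ∈ Iᵢ}` with
`|Iᵢ| ≤ Lᵢ`, then `|∫ (f₁ ⋆ f₂)·f₃| ≤ C M_min^{1/2} K_min^{1/2} L_min^{1/2} ∏‖fᵢ‖_{L²}`. -/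
theorem stmt_11 : ∃ C : ℝ, 0 < C ∧
    ∀ (lam : ℝ), 1 ≤ lam →
    ∀ (M₁ M₂ M₃ K₁ K₂ K₃ L₁ L₂ L₃ : ℝ),
      0 < M₁ → 0 < M₂ → 0 < M₃ → 1 ≤ K₁ → 1 ≤ K₂ → 1 ≤ K₃ → 0 ≤ L₁ → 0 ≤ L₂ → 0 ≤ L₃ →
    ∀ (I₁ I₂ I₃ : Set ℤ),
      ((ENNReal.ofReal lam)⁻¹ • (Measure.count : Measure ℤ)) I₁ ≤ ENNReal.ofReal L₁ →
      ((ENNReal.ofReal lam)⁻¹ • (Measure.count : Measure ℤ)) I₂ ≤ ENNReal.ofReal L₂ →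
      ((ENNReal.ofReal lam)⁻¹ • (Measure.count : Measure ℤ)) I₃ ≤ ENNReal.ofReal L₃ →
    ∀ (f₁ f₂ f₃ : ℝ × ℝ × ℤ → ℝ),
      Measurable f₁ → Measurable f₂ → Measurable f₃ →
      Integrable (fun p => (f₁ p) ^ 2) (kpMeasure lam) →
      Integrable (fun p => (f₂ p) ^ 2) (kpMeasure lam) →
      Integrable (fun p => (f₃ p) ^ 2) (kpMeasure lam) →
      (∀ p : ℝ × ℝ × ℤ, f₁ p ≠ 0 → M₁ / 2 ≤ |p.2.1| ∧ |p.2.1| ≤ 2 * M₁ ∧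
        Real.sqrt (1 + (p.1 - kpOmega p.2.1 ((p.2.2 : ℝ) / lam)) ^ 2) ≤ K₁ ∧ p.2.2 ∈ I₁) →
      (∀ p : ℝ × ℝ × ℤ, f₂ p ≠ 0 → M₂ / 2 ≤ |p.2.1| ∧ |p.2.1| ≤ 2 * M₂ ∧
        Real.sqrt (1 + (p.1 - kpOmega p.2.1 ((p.2.2 : ℝ) / lam)) ^ 2) ≤ K₂ ∧ p.2.2 ∈ I₂) →
      (∀ p : ℝ × ℝ × ℤ, f₃ p ≠ 0 → M₃ / 2 ≤ |p.2.1| ∧ |p.2.1| ≤ 2 * M₃ ∧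
        Real.sqrt (1 + (p.1 - kpOmega p.2.1 ((p.2.2 : ℝ) / lam)) ^ 2) ≤ K₃ ∧ p.2.2 ∈ I₃) →
      |∫ p, (∫ p', f₁ (p - p') * f₂ p' ∂(kpMeasure lam)) * f₃ p ∂(kpMeasure lam)|
        ≤ C * Real.sqrt (min M₁ (min M₂ M₃)) * Real.sqrt (min K₁ (min K₂ K₃))
            * Real.sqrt (min L₁ (min L₂ L₃))
            * Real.sqrt (∫ p, (f₁ p) ^ 2 ∂(kpMeasure lam))
            * Real.sqrt (∫ p, (f₂ p) ^ 2 ∂(kpMeasure lam))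
            * Real.sqrt (∫ p, (f₃ p) ^ 2 ∂(kpMeasure lam)) := by
  refine ⟨2 * √2, by positivity, ?_⟩
  intro lam _ M₁ M₂ M₃ K₁ K₂ K₃ L₁ L₂ L₃ _ _ _ _ _ _ _ _ _ I₁ I₂ I₃ hI₁ hI₂ hI₃ f₁ f₂ f₃
    hf₁ hf₂ hf₃ hint₁ hint₂ hint₃ hs₁ hs₂ hs₃
  have key : ‖∫ p, (∫ p', f₁ (p - p') * f₂ p' ∂(kpMeasure lam)) * f₃ p ∂(kpMeasure lam)‖ₑ ≤ _ :=
    (enorm_integral_conv_mul_le hf₁ hf₂ hf₃).trans <|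
      convForm_le_of_fiberSupportBounds hf₁.enorm hf₂.enorm hf₃.enorm
        (fiberSupportBounds_kp hI₁ fun p hp => (hs₁ p hp).2)
        (fiberSupportBounds_kp hI₂ fun p hp => (hs₂ p hp).2)
        (fiberSupportBounds_kp hI₃ fun p hp => (hs₃ p hp).2)
  simp only [← ENNReal.ofReal_min, ENNReal.ofReal_rpow_half, eLpNorm_enorm] at key
  rw [show volume.prod (volume.prod _) = kpMeasure lam from rfl,
    eLpNorm_two_eq_ofReal_sqrt hint₁, eLpNorm_two_eq_ofReal_sqrt hint₂,
    eLpNorm_two_eq_ofReal_sqrt hint₃] at key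
  simp (disch := positivity) only [← ENNReal.ofReal_mul, ← ofReal_norm] at key
  rw [ENNReal.ofReal_le_ofReal_iff (by positivity), Real.norm_eq_abs] at key
  refine key.trans_eq ?_
  rw [Real.sqrt_min_mul_left zero_le_two, Real.sqrt_min_mul_left zero_le_four,
    show √4 = 2 by rw [Real.sqrt_eq_iff_mul_self_eq] <;> norm_num]
  ring
end
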